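/- arXiv:2211.14778 — 2 statements merged into one kernel-verified Lean document; each statement's English description precedes it below -/
import Mathlib

section
/- Let G be a finite group, C ≠ S a compound closed twin class of P(G) with root y of order p^r and parameter s (so that C = {z ∈ ⟨y⟩ : p^{s+1} ≤ o(z) ≤ p^r}). Then |C| = p^r − p^s and the neighbourhood closure satisfies Ĉ = ⟨y⟩, hence |Ĉ| = p^r. -/
/-!
Every element of `C` is a closed twin of `y`, so `N[C] = N[y]` and `Ĉ = N[N[y]]`. The cyclic
`p`-group `⟨y⟩` is a chain for "is a power of", which gives `⟨y⟩ ⊆ N[N[y]]`. Conversely, an element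
`u ∈ N[N[y]]` outside `⟨y⟩` has `y` as a proper power. If `o(u)` is a power of `p`, then `⟨u⟩` is a
chain as well, and its element of order `p^(r+1)` is a twin of `y`, contradicting the maximality of
`o(y)` in `C`. Otherwise `⟨u⟩` contains an element `w` of prime order `q ≠ p`. Because `C` is
compound it contains some `z ∈ ⟨y⟩` with `⟨z⟩ ≠ ⟨y⟩`, and `z` is a power of `zw` since the orders
are coprime. Then `zw ∈ N[z] = N[y]`, which is impossible by orders.

The count holds because `C = ⟨y⟩ \ ⟨y^(p^(r-s))⟩`.
-/

/-- Closed neighbourhood of a vertex. -/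
def closedNbhd {V : Type*} (Γ : SimpleGraph V) (x : V) : Set V := {y | Γ.Adj x y} ∪ {x}

/-- Closed neighbourhood of a set of vertices (intersection convention; N[∅] = univ). -/
def closedNbhdSet {V : Type*} (Γ : SimpleGraph V) (X : Set V) : Set V :=
  ⋂ x ∈ X, closedNbhd Γ x

/-- Neighbourhood closure X̂ = N[N[X]]. -/
def nbhdClosure {V : Type*} (Γ : SimpleGraph V) (X : Set V) : Set V :=
  closedNbhdSet Γ (closedNbhdSet Γ X)

/-- Closed twin class of a vertex. -/
def twinClass {V : Type*} (Γ : SimpleGraph V) (y : V) : Set V :=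
  {x | closedNbhd Γ x = closedNbhd Γ y}

/-- The power graph of a group. -/
def powerGraph (G : Type*) [Group G] : SimpleGraph G where
  Adj x y := x ≠ y ∧ ((∃ m : ℕ, 0 < m ∧ y = x ^ m) ∨ (∃ m : ℕ, 0 < m ∧ x = y ^ m))
  symm := by constructor; rintro x y ⟨h, h2⟩; exact ⟨h.symm, h2.symm⟩
  loopless := by constructor; rintro x ⟨h, _⟩; exact h rfl

/-- The ⋄-class of an element: elements generating the same cyclic subgroup. -/
def diamondClass {G : Type*} [Group G] (y : G) : Set G :=
  {x | Subgroup.zpowers x = Subgroup.zpowers y}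

open Subgroup

lemma closedNbhdSet_twinClass {V : Type*} (Γ : SimpleGraph V) (y : V) :
    closedNbhdSet Γ (twinClass Γ y) = closedNbhd Γ y := by
  refine subset_antisymm (Set.biInter_subset_of_mem (rfl : y ∈ twinClass Γ y)) ?_
  intro w hw
  exact Set.mem_iInter₂.mpr fun x (hx : closedNbhd Γ x = _) => hx ▸ hw

section Group

variable {G : Type*} [Group G]

lemma ncard_zpowers (g : G) : (zpowers g : Set G).ncard = orderOf g := by
  rw [← Nat.card_coe_set_eq, SetLike.coe_sort_coe, Nat.card_zpowers]

lemma Commute.mem_zpowers_mul {z w : G} (h : Commute z w)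
    (hco : (orderOf z).Coprime (orderOf w)) : z ∈ zpowers (z * w) := by
  have hpow : (z * w) ^ orderOf w = z ^ orderOf w := by
    rw [h.mul_pow, pow_orderOf_eq_one, mul_one]
  have hz : z ∈ zpowers ((z * w) ^ orderOf w) := hpow ▸ mem_zpowers_pow_iff.mpr hco.symm
  exact zpowers_le.mpr (pow_mem (mem_zpowers _) _) hz

end Group

section FiniteGroup

variable {G : Type*} [Group G] [Finite G]

lemma zpowers_eq_zpowers_of_mem_of_orderOf_eq {y z : G} (h : z ∈ zpowers y)
    (ho : orderOf z = orderOf y) : zpowers z = zpowers y :=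
  eq_of_le_of_card_ge (zpowers_le.mpr h) (by rw [Nat.card_zpowers, Nat.card_zpowers, ho])

lemma exists_pos_pow_eq_of_mem_zpowers {x z : G} (h : z ∈ zpowers x) :
    ∃ m : ℕ, 0 < m ∧ z = x ^ m := by
  obtain ⟨m, rfl⟩ := mem_powers_iff_mem_zpowers.mpr h
  rcases Nat.eq_zero_or_pos m with rfl | hm
  · exact ⟨orderOf x, orderOf_pos x, by simp⟩
  · exact ⟨m, hm, rfl⟩

lemma mem_closedNbhd_powerGraph_iff {x z : G} :
    z ∈ closedNbhd (powerGraph G) x ↔ z ∈ zpowers x ∨ x ∈ zpowers z := by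
  constructor
  · rintro (⟨-, ⟨m, -, rfl⟩ | ⟨m, -, rfl⟩⟩ | rfl)
    · exact Or.inl (npow_mem_zpowers x m)
    · exact Or.inr (npow_mem_zpowers z m)
    · exact Or.inl (mem_zpowers z)
  · intro h
    by_cases hzx : z = x
    · exact Or.inr hzx
    · exact Or.inl ⟨Ne.symm hzx,
        h.imp exists_pos_pow_eq_of_mem_zpowers exists_pos_pow_eq_of_mem_zpowers⟩

lemma mem_zpowers_of_orderOf_dvd {y z w : G} (hz : z ∈ zpowers y) (hw : w ∈ zpowers y)
    (h : orderOf z ∣ orderOf w) : z ∈ zpowers w := by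
  classical
  have := Fintype.ofFinite (zpowers y)
  let w' : zpowers y := ⟨w, hw⟩
  let z' : zpowers y := ⟨z, hz⟩
  -- `⟨w'⟩` already supplies `o(w)` solutions of `a ^ o(w) = 1`, and a cyclic group has no more.
  have hroots : (zpowers w' : Set (zpowers y)).toFinset =
      ({a | a ^ orderOf w' = 1} : Finset (zpowers y)) := by
    refine Finset.eq_of_subset_of_card_le (fun a ha => ?_) ?_
    · simpa using orderOf_dvd_iff_pow_eq_one.mp (orderOf_dvd_of_mem_zpowers (by simpa using ha))
    · rw [Set.toFinset_card, ← Nat.card_eq_fintype_card, SetLike.coe_sort_coe, Nat.card_zpowers]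
      exact IsCyclic.card_pow_eq_one_le (orderOf_pos w')
  have hz' : z' ∈ zpowers w' := by
    have : z' ^ orderOf w' = 1 := orderOf_dvd_iff_pow_eq_one.mp (by simpa [z', w'] using h)
    simpa using (Finset.ext_iff.mp hroots z').mpr (by simpa using this)
  obtain ⟨k, hk⟩ := hz'
  exact ⟨k, congrArg Subtype.val hk⟩

lemma mem_zpowers_or_mem_zpowers_of_orderOf_eq_prime_pow {p a : ℕ} (hp : p.Prime) {u z w : G}
    (hu : orderOf u = p ^ a) (hz : z ∈ zpowers u) (hw : w ∈ zpowers u) :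
    z ∈ zpowers w ∨ w ∈ zpowers z := by
  obtain ⟨i, -, hi⟩ := (Nat.dvd_prime_pow hp).mp (hu ▸ orderOf_dvd_of_mem_zpowers hz)
  obtain ⟨j, -, hj⟩ := (Nat.dvd_prime_pow hp).mp (hu ▸ orderOf_dvd_of_mem_zpowers hw)
  rcases le_total i j with h | h
  · exact Or.inl (mem_zpowers_of_orderOf_dvd hz hw (hi ▸ hj ▸ pow_dvd_pow p h))
  · exact Or.inr (mem_zpowers_of_orderOf_dvd hw hz (hi ▸ hj ▸ pow_dvd_pow p h))

lemma zpowers_subset_closedNbhdSet_closedNbhd {p r : ℕ} (hp : p.Prime) {y : G}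
    (hy : orderOf y = p ^ r) :
    (zpowers y : Set G) ⊆ closedNbhdSet (powerGraph G) (closedNbhd (powerGraph G) y) := by
  intro z hz
  refine Set.mem_iInter₂.mpr fun w hw => mem_closedNbhd_powerGraph_iff.mpr ?_
  rcases mem_closedNbhd_powerGraph_iff.mp hw with hwy | hyw
  · exact mem_zpowers_or_mem_zpowers_of_orderOf_eq_prime_pow hp hy hz hwy
  · exact Or.inl (zpowers_le.mpr hyw hz)

lemma mem_twinClass_of_mem_closedNbhdSet_closedNbhd {p a : ℕ} (hp : p.Prime) {u v y : G}
    (hu : orderOf u = p ^ a)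
    (huN : u ∈ closedNbhdSet (powerGraph G) (closedNbhd (powerGraph G) y))
    (hvu : v ∈ zpowers u) (hyv : y ∈ zpowers v) : v ∈ twinClass (powerGraph G) y := by
  have hyu : y ∈ zpowers u := zpowers_le.mpr hvu hyv
  have comparable : ∀ {z w : G}, z ∈ zpowers u → w ∈ zpowers u → z ∈ zpowers w ∨ w ∈ zpowers z :=
    mem_zpowers_or_mem_zpowers_of_orderOf_eq_prime_pow hp hu
  ext w
  simp only [mem_closedNbhd_powerGraph_iff]
  constructor
  · rintro (hwv | hvw)
    · exact comparable (zpowers_le.mpr hvu hwv) hyu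
    · exact Or.inr (zpowers_le.mpr hvw hyv)
  · rintro (hwy | hyw)
    · exact comparable (zpowers_le.mpr hyu hwy) hvu
    · have hwN : w ∈ closedNbhd (powerGraph G) y := mem_closedNbhd_powerGraph_iff.mpr (Or.inr hyw)
      rcases mem_closedNbhd_powerGraph_iff.mp (Set.mem_iInter₂.mp huN w hwN) with huw | hwu
      · exact Or.inr (zpowers_le.mpr huw hvu)
      · exact comparable hwu hvu

lemma not_commute_of_mem_twinClass {y z w : G} (hz : z ∈ twinClass (powerGraph G) y)
    (hzy : z ∈ zpowers y) (hne : zpowers z ≠ zpowers y) (hco : (orderOf y).Coprime (orderOf w))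
    (hw : w ≠ 1) : ¬Commute z w := by
  intro hzw
  have hcoz : (orderOf z).Coprime (orderOf w) :=
    hco.coprime_dvd_left (orderOf_dvd_of_mem_zpowers hzy)
  have hox := hzw.orderOf_mul_eq_mul_orderOf_of_coprime hcoz
  have hx : z * w ∈ closedNbhd (powerGraph G) y :=
    (Set.ext_iff.mp hz _).mp (mem_closedNbhd_powerGraph_iff.mpr (Or.inr (hzw.mem_zpowers_mul hcoz)))
  rcases mem_closedNbhd_powerGraph_iff.mp hx with hxy | hyx
  · have hwy : orderOf w ∣ orderOf y :=
      (dvd_mul_left _ _).trans (hox ▸ orderOf_dvd_of_mem_zpowers hxy)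
    exact hw (orderOf_eq_one_iff.mp (Nat.Coprime.eq_one_of_dvd hco.symm hwy))
  · have hyz : orderOf y ∣ orderOf z :=
      hco.dvd_of_dvd_mul_right (hox ▸ orderOf_dvd_of_mem_zpowers hyx)
    exact hne (zpowers_eq_zpowers_of_mem_of_orderOf_eq hzy
      (Nat.dvd_antisymm (orderOf_dvd_of_mem_zpowers hzy) hyz))

lemma closedNbhdSet_closedNbhd_subset_zpowers {p r : ℕ} (hp : p.Prime) {y z : G}
    (hy : orderOf y = p ^ r)
    (hmax : ∀ v ∈ twinClass (powerGraph G) y, orderOf v ≤ orderOf y)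
    (hz : z ∈ twinClass (powerGraph G) y) (hzy : z ∈ zpowers y) (hne : zpowers z ≠ zpowers y) :
    closedNbhdSet (powerGraph G) (closedNbhd (powerGraph G) y) ⊆ zpowers y := by
  intro u hu
  rw [SetLike.mem_coe]
  by_contra huy
  have hyN : y ∈ closedNbhd (powerGraph G) y :=
    mem_closedNbhd_powerGraph_iff.mpr (Or.inl (mem_zpowers y))
  have hyu : y ∈ zpowers u :=
    (mem_closedNbhd_powerGraph_iff.mp (Set.mem_iInter₂.mp hu y hyN)).resolve_left huy
  have hu0 : orderOf u ≠ 0 := (orderOf_pos u).ne'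
  by_cases hq : ∃ q, q.Prime ∧ q ∣ orderOf u ∧ q ≠ p
  · obtain ⟨q, hq, hqu, hqp⟩ := hq
    have how := orderOf_pow_orderOf_div hu0 hqu
    have hco : (orderOf y).Coprime (orderOf (u ^ (orderOf u / q))) := by
      rw [hy, how]
      exact Nat.Coprime.pow_left r ((Nat.coprime_primes hp hq).mpr hqp.symm)
    have hw : u ^ (orderOf u / q) ≠ 1 := fun h => hq.one_lt.ne' (by rw [← how, h, orderOf_one])
    obtain ⟨i, rfl⟩ := zpowers_le.mpr hyu hzy
    exact not_commute_of_mem_twinClass hz hzy hne hco hw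
      (((Commute.refl u).zpow_left i).pow_right _)
  · push Not at hq
    obtain ⟨a, hpow⟩ : ∃ a, orderOf u = p ^ a :=
      ⟨_, Nat.eq_prime_pow_of_unique_prime_dvd hu0 fun hd hdu => hq _ hd hdu⟩
    have hra : r < a := by
      have hle : r ≤ a := (Nat.pow_dvd_pow_iff_le_right hp.one_lt).mp
        (hy ▸ hpow ▸ orderOf_dvd_of_mem_zpowers hyu)
      refine hle.lt_of_ne fun hra => huy ?_
      rw [zpowers_eq_zpowers_of_mem_of_orderOf_eq hyu (by rw [hy, hpow, hra])]
      exact mem_zpowers u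
    have hov := orderOf_pow_orderOf_div hu0 (hpow ▸ pow_dvd_pow p hra : p ^ (r + 1) ∣ orderOf u)
    have hvu : u ^ (orderOf u / p ^ (r + 1)) ∈ zpowers u := pow_mem (mem_zpowers u) _
    have hyv := mem_zpowers_of_orderOf_dvd hyu hvu (by rw [hy, hov]; exact pow_dvd_pow p r.le_succ)
    have hle := hmax _ (mem_twinClass_of_mem_closedNbhdSet_closedNbhd hp hpow hu hvu hyv)
    rw [hov, hy] at hle
    exact absurd hle (Nat.pow_lt_pow_right hp.one_lt r.lt_succ_self).not_ge

theorem nbhdClosure_twinClass_eq_zpowers {p r : ℕ} (hp : p.Prime) {y z : G}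
    (hy : orderOf y = p ^ r)
    (hmax : ∀ v ∈ twinClass (powerGraph G) y, orderOf v ≤ orderOf y)
    (hz : z ∈ twinClass (powerGraph G) y) (hzy : z ∈ zpowers y) (hne : zpowers z ≠ zpowers y) :
    nbhdClosure (powerGraph G) (twinClass (powerGraph G) y) = zpowers y := by
  rw [nbhdClosure, closedNbhdSet_twinClass]
  exact (closedNbhdSet_closedNbhd_subset_zpowers hp hy hmax hz hzy hne).antisymm
    (zpowers_subset_closedNbhdSet_closedNbhd hp hy)

lemma ncard_setOf_mem_zpowers_pow_succ_le_orderOf {p r s : ℕ} (hp : p.Prime) {y : G}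
    (hy : orderOf y = p ^ r) (hsr : s ≤ r) :
    {z | z ∈ zpowers y ∧ p ^ (s + 1) ≤ orderOf z ∧ orderOf z ≤ p ^ r}.ncard = p ^ r - p ^ s := by
  set t := y ^ (orderOf y / p ^ s)
  have hot : orderOf t = p ^ s :=
    orderOf_pow_orderOf_div (orderOf_pos y).ne' (hy ▸ pow_dvd_pow p hsr)
  have hty : t ∈ zpowers y := pow_mem (mem_zpowers y) _
  have hset : {z | z ∈ zpowers y ∧ p ^ (s + 1) ≤ orderOf z ∧ orderOf z ≤ p ^ r} =
      (zpowers y : Set G) \ zpowers t := by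
    ext z
    simp only [Set.mem_ofPred_eq, Set.mem_sdiff, SetLike.mem_coe, and_congr_right_iff]
    intro hzy
    obtain ⟨i, hir, hi⟩ := (Nat.dvd_prime_pow hp).mp (hy ▸ orderOf_dvd_of_mem_zpowers hzy)
    have hzt : z ∈ zpowers t ↔ i ≤ s :=
      ⟨fun h => (Nat.pow_dvd_pow_iff_le_right hp.one_lt).mp
          (hi ▸ hot ▸ orderOf_dvd_of_mem_zpowers h),
        fun h => mem_zpowers_of_orderOf_dvd hzy hty (hi ▸ hot ▸ pow_dvd_pow p h)⟩
    rw [hzt, hi, Nat.pow_le_pow_iff_right hp.one_lt, Nat.pow_le_pow_iff_right hp.one_lt]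
    omega
  rw [hset, Set.ncard_sdiff (SetLike.coe_subset_coe.mpr (zpowers_le.mpr hty)), ncard_zpowers,
    ncard_zpowers, hy, hot]

end FiniteGroup

theorem stmt12_general {G : Type*} [Group G] [Fintype G] (C : Set G) (y : G) (p r s : ℕ)
    (hp : p.Prime)
    (hC : C = twinClass (powerGraph G) y)
    (hcomp : ∃ a ∈ C, ∃ b ∈ C, Subgroup.zpowers a ≠ Subgroup.zpowers b)
    (hy : orderOf y = p ^ r)
    (hdesc : C = {z | z ∈ Subgroup.zpowers y ∧ p ^ (s + 1) ≤ orderOf z ∧ orderOf z ≤ p ^ r}) :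
    C.ncard = p ^ r - p ^ s ∧
      nbhdClosure (powerGraph G) C = (Subgroup.zpowers y : Set G) ∧
      (nbhdClosure (powerGraph G) C).ncard = p ^ r := by
  have hyC : y ∈ C := hC ▸ rfl
  have hsr : s ≤ r := by
    have hy' := (hdesc ▸ hyC).2.1
    rw [hy, Nat.pow_le_pow_iff_right hp.one_lt] at hy'
    omega
  obtain ⟨z, hzC, hne⟩ : ∃ z ∈ C, zpowers z ≠ zpowers y := by
    obtain ⟨a, ha, b, hb, hab⟩ := hcomp
    by_cases hay : zpowers a = zpowers y
    · exact ⟨b, hb, fun hby => hab (hay.trans hby.symm)⟩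
    · exact ⟨a, ha, hay⟩
  have hclosure : nbhdClosure (powerGraph G) C = zpowers y := by
    have hmax (v) (hv : v ∈ C) : orderOf v ≤ orderOf y := hy ▸ (hdesc ▸ hv).2.2
    subst hC
    exact nbhdClosure_twinClass_eq_zpowers hp hy hmax hzC (hdesc ▸ hzC).1 hne
  refine ⟨?_, hclosure, by rw [hclosure, ncard_zpowers, hy]⟩
  rw [hdesc]
  exact ncard_setOf_mem_zpowers_pow_succ_le_orderOf hp hy hsr

theorem stmt12 {G : Type*} [Group G] [Fintype G] (C : Set G) (y : G) (p r s : ℕ)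
    (hp : p.Prime) (hr : 2 ≤ r) (hs : s ≤ r - 2)
    (hC : C = twinClass (powerGraph G) y)
    (hS : C ≠ twinClass (powerGraph G) 1)
    (hcomp : ∃ a ∈ C, ∃ b ∈ C, Subgroup.zpowers a ≠ Subgroup.zpowers b)
    (hy : orderOf y = p ^ r)
    (hdesc : C = {z | z ∈ Subgroup.zpowers y ∧ p ^ (s + 1) ≤ orderOf z ∧ orderOf z ≤ p ^ r}) :
    C.ncard = p ^ r - p ^ s ∧
      nbhdClosure (powerGraph G) C = (Subgroup.zpowers y : Set G) ∧
      (nbhdClosure (powerGraph G) C).ncard = p ^ r :=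
  stmt12_general C y p r s hp hC hcomp hy hdesc
end

section
/- Let G be a finite group and X = [x]_⋄, Y = [y]_⋄ distinct ⋄-classes with |X| = |Y| ≠ 1, such that y is a power of x. Then o(x) = 2·o(y) with o(y) odd, τ := x^{o(y)} is an involution not in X, and every element of X has τ as a power. -/
/-! The class `[x]_⋄` consists of the generators of `⟨x⟩`, so it has `φ (o x)` elements. Since
`y ∈ ⟨x⟩` but `⟨y⟩ ≠ ⟨x⟩`, `o y` is a proper divisor of `o x` with the same totient, which forces
`o x = 2 * o y` with `o y` odd. Then `x ^ o y` is an involution, and it is a power of every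
generator `a` of `⟨x⟩`; it is not in `[x]_⋄` because `φ 2 = 1` while `|[x]_⋄| ≠ 1`. -/

open Subgroup

section

variable {G : Type*} [Group G]

lemma mem_diamondClass {x a : G} : a ∈ diamondClass x ↔ zpowers a = zpowers x := Iff.rfl

lemma diamondClass_eq_iff {x y : G} : diamondClass x = diamondClass y ↔ zpowers x = zpowers y :=
  ⟨fun h ↦ mem_diamondClass.mp (h ▸ mem_diamondClass.mpr rfl),
    fun h ↦ by simp only [diamondClass, h]⟩

lemma orderOf_eq_of_mem_diamondClass {x a : G} (ha : a ∈ diamondClass x) :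
    orderOf a = orderOf x := by
  rw [← Nat.card_zpowers, ← Nat.card_zpowers x, mem_diamondClass.mp ha]

lemma IsOfFinOrder.mem_diamondClass_iff {x a : G} (hx : IsOfFinOrder x) :
    a ∈ diamondClass x ↔ a ∈ zpowers x ∧ orderOf a = orderOf x := by
  have : Finite (zpowers x) := hx.finite_zpowers.to_subtype
  refine ⟨fun ha ↦ ⟨mem_diamondClass.mp ha ▸ mem_zpowers a, orderOf_eq_of_mem_diamondClass ha⟩, ?_⟩
  rintro ⟨hmem, hord⟩
  refine eq_of_le_of_card_ge (zpowers_le.mpr hmem) ?_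
  rw [Nat.card_zpowers, Nat.card_zpowers, hord]

lemma ncard_diamondClass {x : G} (hx : IsOfFinOrder x) :
    (diamondClass x).ncard = (orderOf x).totient := by
  classical
  have : Finite (zpowers x) := hx.finite_zpowers.to_subtype
  let := Fintype.ofFinite (zpowers x)
  have himage : diamondClass x = (↑) '' {a : zpowers x | orderOf a = orderOf x} := by
    ext a
    rw [hx.mem_diamondClass_iff]
    constructor
    · rintro ⟨hmem, hord⟩
      exact ⟨⟨a, hmem⟩, (orderOf_mk a hmem).trans hord, rfl⟩
    · rintro ⟨b, hb, rfl⟩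
      exact ⟨b.2, (orderOf_coe b).trans hb⟩
  have hcard : orderOf x ∣ Fintype.card (zpowers x) := by
    rw [← Nat.card_eq_fintype_card, Nat.card_zpowers]
  rw [himage, Set.ncard_image_of_injective _ Subtype.coe_injective, Set.ncard_eq_toFinset_card',
    Set.toFinset_ofPred, IsCyclic.card_orderOf_eq_totient hcard]

lemma IsOfFinOrder.exists_pos_pow_eq_of_mem_zpowers {a b : G} (ha : IsOfFinOrder a)
    (hb : b ∈ zpowers a) : ∃ m : ℕ, 0 < m ∧ b = a ^ m := by
  obtain ⟨k, rfl⟩ := ha.mem_powers_iff_mem_zpowers.mpr hb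
  exact ⟨k + orderOf a, by have := ha.orderOf_pos; omega,
    by rw [pow_add, pow_orderOf_eq_one, mul_one]⟩

end

theorem stmt19 {G : Type*} [Group G] [Fintype G] (x y : G)
    (hXY : diamondClass x ≠ diamondClass y)
    (hcard : (diamondClass x).ncard = (diamondClass y).ncard)
    (hne1 : (diamondClass x).ncard ≠ 1)
    (hpow : ∃ m : ℕ, 0 < m ∧ y = x ^ m) :
    orderOf x = 2 * orderOf y ∧ Odd (orderOf y) ∧
      orderOf (x ^ orderOf y) = 2 ∧ x ^ orderOf y ∉ diamondClass x ∧
      ∀ a ∈ diamondClass x, ∃ m : ℕ, 0 < m ∧ x ^ orderOf y = a ^ m := by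
  obtain ⟨m, -, hy⟩ := hpow
  have hmem : y ∈ zpowers x := hy ▸ pow_mem (mem_zpowers x) m
  have hdvd : orderOf y ∣ orderOf x := orderOf_dvd_of_mem_zpowers hmem
  have hne : orderOf y ≠ orderOf x := fun h ↦ hXY <| diamondClass_eq_iff.mpr
    ((isOfFinOrder_of_finite x).mem_diamondClass_iff.mpr ⟨hmem, h⟩).symm
  have htot : (orderOf y).totient = (orderOf x).totient := by
    rwa [← ncard_diamondClass (isOfFinOrder_of_finite y),
      ← ncard_diamondClass (isOfFinOrder_of_finite x), eq_comm]
  have htwo : orderOf x = 2 * orderOf y :=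
    ((Nat.eq_or_eq_of_totient_eq_totient hdvd htot).resolve_left hne).symm
  have hodd : Odd (orderOf y) :=
    Nat.not_even_iff_odd.mp fun he ↦ hne (he.eq_of_totient_eq_totient hdvd htot)
  have hone : orderOf y ≠ 1 := by
    rintro h
    rw [ncard_diamondClass (isOfFinOrder_of_finite x), htwo, h] at hne1
    exact hne1 rfl
  have hτ : orderOf (x ^ orderOf y) = 2 := by
    rw [orderOf_pow_of_dvd (orderOf_pos y).ne' hdvd, htwo, Nat.mul_div_cancel _ (orderOf_pos y)]
  refine ⟨htwo, hodd, hτ, fun hτX ↦ ?_, fun a ha ↦ ?_⟩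
  · have := orderOf_eq_of_mem_diamondClass hτX
    omega
  · refine (isOfFinOrder_of_finite a).exists_pos_pow_eq_of_mem_zpowers ?_
    rw [mem_diamondClass.mp ha]
    exact pow_mem (mem_zpowers x) _
end
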